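/- Let n ≥ 2 and let M be a swap Kripke pre-model for C_nᴰ. Then for all formulas α, β over Σ₁ᴰ and every world w: (1) if v^n_w(O(α → β)) ∈ D_n and v^n_w(Oα) ∈ D_n then v^n_w(Oβ) ∈ D_n; (2) if moreover the valuations of M satisfy the restrictions (i) v^n_w(α) = t^n_0 implies v^n_w(α ∧ ¬α) = T_n and (ii) for 1 ≤ k ≤ n−1, v^n_w(α) = t^n_k implies v^n_w(α ∧ ¬α) ∈ I_n and v^n_w(α¹) = t^n_{k−1}, then v^n_w(Oα) ∈ D_n implies v^n_w(∼^{(n)} O ∼^{(n)} α) ∈ D_n. -/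

import Mathlib

/-!
(O-K) is Boolean modus ponens on first coordinates at every successor world.
For (D_n): negation swaps T and F, and every consistency power β^j (j ≥ 1) of a Boolean
value is T. Under the restrictions, a value t_k of α forces α^{k+1} = F, so whenever
α is designated either ¬α or some conjunct of α^{(n)} is false, i.e. ∼^{(n)}α = F.
Hence if Oα is designated, ∼^{(n)}α = F at every successor, so by seriality
O∼^{(n)}α = F, and then ¬ and all consistency powers of it are T.
-/

/-- Formulas over the signature Σ₁ᴰ = {∧, ∨, →, ¬, O}, with countably many
propositional variables. -/
inductive Form : Type
  | var : ℕ → Form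
  | and : Form → Form → Form
  | or : Form → Form → Form
  | imp : Form → Form → Form
  | neg : Form → Form
  | obl : Form → Form

namespace Form

/-- α⁰ = α, α^{k+1} = ¬(α^k ∧ ¬α^k). -/
def pow (α : Form) : ℕ → Form
  | 0 => α
  | k + 1 => ((α.pow k).and (α.pow k).neg).neg

/-- α^{(n)} = α¹ ∧ … ∧ αⁿ (for n ≥ 1). -/
def bigPow (α : Form) : ℕ → Form
  | 0 => α.pow 1
  | 1 => α.pow 1
  | m + 2 => (α.bigPow (m + 1)).and (α.pow (m + 2))

/-- ∼^{(n)}α := ¬α ∧ α^{(n)}. -/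
def snn (n : ℕ) (α : Form) : Form := α.neg.and (α.bigPow n)

end Form

/-- The n+2 snapshots of the swap structure for C_nᴰ: T_n, t^n_0, …, t^n_{n-1}, F_n. -/
inductive SVn (n : ℕ) : Type
  | T : SVn n
  | t : Fin n → SVn n
  | F : SVn n
deriving DecidableEq

namespace SVn

/-- The coordinates of a snapshot, as an element of 2^{n+1} (0-indexed):
T_n = (1,0,1,…,1), t^n_i has its unique 0 at (0-indexed) position i+2
(so t^n_{n-1} = (1,…,1)), and F_n = (0,1,…,1). -/
def coord {n : ℕ} : SVn n → Fin (n + 1) → Bool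
  | .T, j => decide (j.val ≠ 1)
  | .t i, j => decide (j.val ≠ i.val + 2)
  | .F, j => decide (j.val ≠ 0)

/-- First coordinate z₁. -/
def p1 {n : ℕ} (z : SVn n) : Bool := z.coord 0

/-- Second coordinate z₂. -/
def p2 {n : ℕ} (z : SVn n) : Bool := z.coord 1

/-- Designated values D_n = A_n ∖ {F_n}, i.e. first coordinate 1. -/
def desig {n : ℕ} (z : SVn n) : Prop := z.p1 = true

/-- Boolean values Boo_n = {T_n, F_n}. -/
def boo {n : ℕ} (z : SVn n) : Prop := z = SVn.T ∨ z = SVn.F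

/-- Inconsistent values I_n = A_n ∖ Boo_n. -/
def incons {n : ℕ} (z : SVn n) : Prop := ∃ i : Fin n, z = SVn.t i

end SVn

/-- Boolean implication a ⊃ b. -/
def boolImp (a b : Bool) : Bool := !a || b

/-- Membership of c in a #̃ b for a binary connective # with Boolean counterpart
`op`: c₁ = a₁ op b₁, and moreover c ∈ Boo_n whenever a, b ∈ Boo_n. -/
def opCond {n : ℕ} (op : Bool → Bool → Bool) (c a b : SVn n) : Prop :=
  c.p1 = op a.p1 b.p1 ∧ (a.boo → b.boo → c.boo)

/-- Swap Kripke pre-model conditions for C_nᴰ on a serial frame (W,R) with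
valuations v_w : Form → A_n. -/
structure IsPreModelCnD (n : ℕ) {W : Type} (R : W → W → Prop)
    (v : W → Form → SVn n) : Prop where
  serial : ∀ w, ∃ w', R w w'
  and_ : ∀ w α β, opCond (· && ·) (v w (α.and β)) (v w α) (v w β)
  or_ : ∀ w α β, opCond (· || ·) (v w (α.or β)) (v w α) (v w β)
  imp_ : ∀ w α β, opCond boolImp (v w (α.imp β)) (v w α) (v w β)
  neg_ : ∀ w α, (v w α.neg).p1 = (v w α).p2 ∧ (v w α.neg).p2 ≤ (v w α).p1
  obl_ : ∀ w α, ((v w α.obl).p1 = true ↔ ∀ w', R w w' → (v w' α).p1 = true)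

/-- The RNmatrix restrictions on valuations:
(i) v_w(α) = t^n_0 implies v_w(α ∧ ¬α) = T_n;
(ii) for 1 ≤ k ≤ n−1, v_w(α) = t^n_k implies v_w(α ∧ ¬α) ∈ I_n and
v_w(α¹) = t^n_{k−1}. -/
def RestrCnD (n : ℕ) {W : Type} (v : W → Form → SVn n) : Prop :=
  (∀ (w : W) (α : Form) (h0 : 0 < n),
      v w α = SVn.t ⟨0, h0⟩ → v w (α.and α.neg) = SVn.T) ∧
  (∀ (w : W) (α : Form) (k : ℕ) (hk : k < n), 1 ≤ k → v w α = SVn.t ⟨k, hk⟩ →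
      (v w (α.and α.neg)).incons ∧ v w (α.pow 1) = SVn.t ⟨k - 1, by omega⟩)

/-- A swap Kripke model for C_nᴰ: a pre-model satisfying the restrictions (i), (ii)
and (iii): v_w(α) ∈ Boo_n implies v_w(Oα) ∈ Boo_n. -/
structure IsModelCnD (n : ℕ) {W : Type} (R : W → W → Prop)
    (v : W → Form → SVn n) : Prop where
  pre : IsPreModelCnD n R v
  restr : RestrCnD n v
  booObl : ∀ w α, (v w α).boo → (v w α.obl).boo

namespace Form

theorem pow_pow (α : Form) (j k : ℕ) : (α.pow j).pow k = α.pow (k + j) := by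
  induction k with
  | zero => simp [pow]
  | succ k ih => rw [Nat.succ_add, pow, ih, pow]

theorem bigPow_succ (α : Form) {m : ℕ} (hm : 1 ≤ m) :
    α.bigPow (m + 1) = (α.bigPow m).and (α.pow (m + 1)) := by
  obtain ⟨m, rfl⟩ := Nat.exists_eq_add_of_le' hm
  rfl

end Form

namespace SVn

variable {n : ℕ}

@[simp] theorem p1_T : (T : SVn n).p1 = true := by simp [p1, coord]

@[simp] theorem p1_F : (F : SVn n).p1 = false := by simp [p1, coord]

theorem val_one_eq_one (hn : 1 ≤ n) : ((1 : Fin (n + 1)) : ℕ) = 1 := by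
  rw [Fin.val_one']; exact Nat.mod_eq_of_lt (by omega)

theorem p2_T (hn : 1 ≤ n) : (T : SVn n).p2 = false := by
  simp only [p2, coord, val_one_eq_one hn]; simp

theorem p2_F (hn : 1 ≤ n) : (F : SVn n).p2 = true := by
  simp only [p2, coord, val_one_eq_one hn]; simp

theorem p1_eq_false_iff (z : SVn n) : z.p1 = false ↔ z = F := by
  cases z <;> simp [p1, coord]

theorem p2_eq_false_iff (hn : 1 ≤ n) (z : SVn n) : z.p2 = false ↔ z = T := by
  cases z <;> simp only [p2, coord, val_one_eq_one hn] <;> simp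

theorem desig_iff_ne_F (z : SVn n) : z.desig ↔ z ≠ F := by
  rw [desig, ne_eq, ← p1_eq_false_iff, Bool.not_eq_false]

theorem p1_and_p2_eq_false_of_boo (hn : 1 ≤ n) {z : SVn n} (hz : z.boo) :
    (z.p1 && z.p2) = false := by
  rcases hz with rfl | rfl <;> simp [p2_T hn]

end SVn

namespace IsPreModelCnD

variable {n : ℕ} {W : Type} {R : W → W → Prop} {v : W → Form → SVn n}
  (hM : IsPreModelCnD n R v) {w : W}
include hM

theorem desig_obl_of_desig_obl_imp {α β : Form} (hαβ : (v w (α.imp β).obl).desig)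
    (hα : (v w α.obl).desig) : (v w β.obl).desig := by
  refine (hM.obl_ w β).2 fun w' hw' => ?_
  have himp := (hM.imp_ w' α β).1
  rw [(hM.obl_ w _).1 hαβ w' hw', (hM.obl_ w α).1 hα w' hw'] at himp
  simpa [boolImp] using himp.symm

theorem obl_eq_F_of_forall {α : Form} (h : ∀ w', R w w' → v w' α = SVn.F) :
    v w α.obl = SVn.F := by
  obtain ⟨w', hw'⟩ := hM.serial w
  rw [← SVn.p1_eq_false_iff, Bool.eq_false_iff]
  intro hO
  simpa [h w' hw'] using (hM.obl_ w α).1 hO w' hw'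

theorem neg_eq_T_of_eq_F (hn : 1 ≤ n) {β : Form} (hβ : v w β = SVn.F) :
    v w β.neg = SVn.T := by
  have h := (hM.neg_ w β).2
  rw [hβ, SVn.p1_F] at h
  exact (SVn.p2_eq_false_iff hn _).1 (Bool.eq_false_of_le_false h)

theorem neg_eq_F_of_eq_T (hn : 1 ≤ n) {β : Form} (hβ : v w β = SVn.T) :
    v w β.neg = SVn.F := by
  rw [← SVn.p1_eq_false_iff, (hM.neg_ w β).1, hβ, SVn.p2_T hn]

theorem pow_one_eq_T_of_boo (hn : 1 ≤ n) {β : Form} (hβ : (v w β).boo) :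
    v w (β.pow 1) = SVn.T := by
  have hcontra : v w (β.and β.neg) = SVn.F := by
    rw [← SVn.p1_eq_false_iff, (hM.and_ w β β.neg).1, (hM.neg_ w β).1]
    exact SVn.p1_and_p2_eq_false_of_boo hn hβ
  exact hM.neg_eq_T_of_eq_F hn hcontra

theorem pow_eq_T_of_boo (hn : 1 ≤ n) {β : Form} (hβ : (v w β).boo) {j : ℕ} (hj : 1 ≤ j) :
    v w (β.pow j) = SVn.T := by
  induction j, hj using Nat.le_induction with
  | base => exact hM.pow_one_eq_T_of_boo hn hβ
  | succ j _ ih => exact hM.pow_one_eq_T_of_boo hn (β := β.pow j) (Or.inl ih)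

theorem p1_bigPow_eq_true_iff (α : Form) {m : ℕ} (hm : 1 ≤ m) :
    (v w (α.bigPow m)).p1 = true ↔ ∀ j, 1 ≤ j → j ≤ m → (v w (α.pow j)).p1 = true := by
  induction m, hm using Nat.le_induction with
  | base =>
    refine ⟨fun h j hj1 hj2 => ?_, fun h => h 1 le_rfl le_rfl⟩
    obtain rfl : j = 1 := by omega
    exact h
  | succ m hm ih =>
    rw [α.bigPow_succ hm, (hM.and_ w _ _).1, Bool.and_eq_true, ih]
    refine ⟨fun ⟨h, hlast⟩ j hj1 hj2 => ?_, fun h => ⟨fun j hj1 hj2 => h j hj1 (by omega),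
      h (m + 1) (by omega) le_rfl⟩⟩
    obtain hlt | rfl := Nat.lt_or_eq_of_le hj2
    · exact h j hj1 (by omega)
    · exact hlast

theorem p1_snn (m : ℕ) (α : Form) :
    (v w (Form.snn m α)).p1 = ((v w α).p2 && (v w (α.bigPow m)).p1) := by
  rw [Form.snn, (hM.and_ w _ _).1, (hM.neg_ w α).1]

/-- Restrictions (i) and (ii) make the value t_k descend one step per application of `·¹`,
until t_0 is reached, whose next consistency power is false. -/
theorem pow_succ_eq_F_of_eq_t (hr : RestrCnD n v) {k : ℕ} (hk : k < n) {α : Form}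
    (hα : v w α = SVn.t ⟨k, hk⟩) : v w (α.pow (k + 1)) = SVn.F := by
  induction k generalizing α with
  | zero => exact hM.neg_eq_F_of_eq_T (by omega) (hr.1 w α hk hα)
  | succ k ih =>
    have hα1 : v w (α.pow 1) = SVn.t ⟨k, by omega⟩ := (hr.2 w α (k + 1) hk (by omega) hα).2
    rw [← Form.pow_pow, ih (by omega) hα1]

theorem snn_eq_F_of_desig (hn : 1 ≤ n) (hr : RestrCnD n v) {α : Form} (hα : (v w α).desig) :
    v w (Form.snn n α) = SVn.F := by
  rw [← SVn.p1_eq_false_iff, hM.p1_snn]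
  cases hv : v w α with
  | T => simp [SVn.p2_T hn]
  | F => exact absurd hv ((SVn.desig_iff_ne_F _).1 hα)
  | t i =>
    have hpow := hM.pow_succ_eq_F_of_eq_t hr i.isLt hv
    have hbig : (v w (α.bigPow n)).p1 = false := by
      rw [Bool.eq_false_iff, ne_eq, hM.p1_bigPow_eq_true_iff α hn]
      exact fun h => by simpa [hpow] using h (i + 1) (by omega) i.isLt
    rw [hbig, Bool.and_false]

theorem snn_desig_of_eq_F (hn : 1 ≤ n) {α : Form} (hα : v w α = SVn.F) :
    (v w (Form.snn n α)).desig := by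
  rw [SVn.desig, hM.p1_snn, hα, SVn.p2_F hn, Bool.true_and, hM.p1_bigPow_eq_true_iff α hn]
  intro j hj _
  rw [hM.pow_eq_T_of_boo hn (Or.inr hα) hj, SVn.p1_T]

end IsPreModelCnD

/-- In any swap Kripke pre-model for C_nᴰ (n ≥ 2): (1) the (O-K) axiom behaves
soundly; (2) under the restrictions (i), (ii), the (D_n) axiom behaves soundly. -/
theorem CnD_modal_axioms (n : ℕ) (hn : 2 ≤ n) {W : Type} (R : W → W → Prop)
    (v : W → Form → SVn n) (hM : IsPreModelCnD n R v) :
    (∀ (w : W) (α β : Form),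
        (v w (α.imp β).obl).desig → (v w α.obl).desig → (v w β.obl).desig) ∧
    (RestrCnD n v → ∀ (w : W) (α : Form),
        (v w α.obl).desig → (v w (Form.snn n ((Form.snn n α).obl))).desig) := by
  have hn1 : 1 ≤ n := by omega
  refine ⟨fun w α β => hM.desig_obl_of_desig_obl_imp, fun hr w α hO => ?_⟩
  have hsnn : ∀ w', R w w' → v w' (Form.snn n α) = SVn.F :=
    fun w' hw' => hM.snn_eq_F_of_desig hn1 hr ((hM.obl_ w α).1 hO w' hw')
  exact hM.snn_desig_of_eq_F hn1 (hM.obl_eq_F_of_forall hsnn)
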